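/- arXiv:2506.23677 — 7 statements merged into one kernel-verified Lean document; each statement's English description precedes it below -/
import Mathlib

section
/- If X and Y are discrete random variables with bounded supports, with support minima/maxima x_l, x_u and y_l, y_u respectively, and X ≤_wd Y, then x_u − x_l ≤ y_u − y_l. -/
open MeasureTheory Set Filter
open scoped ENNReal NNReal

/-- The Lévy concentration function of a distribution `μ` on `ℝ`. -/
noncomputable def levyQ (μ : Measure ℝ) (ε : ℝ) : ℝ≥0∞ :=
  ⨆ x₀ : ℝ, μ (Set.Icc x₀ (x₀ + ε))

/-- `wdLE μ ν` : a random variable with distribution `μ` is less weakly dispersive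
than one with distribution `ν`, i.e. `Q_μ(ε) ≥ Q_ν(ε)` for all `ε > 0`. -/
def wdLE (μ ν : Measure ℝ) : Prop :=
  ∀ ε : ℝ, 0 < ε → levyQ ν ε ≤ levyQ μ ε

theorem wdLE_range_le
    (μ ν : Measure ℝ) [IsProbabilityMeasure μ] [IsProbabilityMeasure ν]
    (hμd : ∃ s : Set ℝ, s.Countable ∧ μ sᶜ = 0)
    (hνd : ∃ s : Set ℝ, s.Countable ∧ ν sᶜ = 0)
    (xl xu yl yu : ℝ) (hx : xl ≤ xu) (hy : yl ≤ yu)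
    (hxl : μ {xl} ≠ 0) (hxu : μ {xu} ≠ 0) (hμs : μ (Set.Icc xl xu)ᶜ = 0)
    (hyl : ν {yl} ≠ 0) (hyu : ν {yu} ≠ 0) (hνs : ν (Set.Icc yl yu)ᶜ = 0)
    (h : wdLE μ ν) :
    xu - xl ≤ yu - yl := by
  by_contra hlt
  push_neg at hlt
  obtain ⟨ε, hε1, hε2⟩ := exists_between hlt
  have hεpos : 0 < ε := lt_of_le_of_lt (sub_nonneg.mpr hy) hε1
  -- ν gives full mass to an interval of length ε
  have hν1 : (1 : ℝ≥0∞) ≤ levyQ ν ε := by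
    have hsub : Set.Icc yl yu ⊆ Set.Icc yl (yl + ε) := by
      apply Set.Icc_subset_Icc le_rfl
      linarith
    have : ν (Set.Icc yl yu) = 1 :=
      (prob_compl_eq_zero_iff measurableSet_Icc).mp hνs
    calc (1 : ℝ≥0∞) = ν (Set.Icc yl yu) := this.symm
      _ ≤ ν (Set.Icc yl (yl + ε)) := measure_mono hsub
      _ ≤ levyQ ν ε := le_iSup (fun x₀ => ν (Set.Icc x₀ (x₀ + ε))) yl
  set c : ℝ≥0∞ := min (μ {xl}) (μ {xu}) with hc
  have hcpos : c ≠ 0 := by rw [hc]; exact fun h0 => (lt_min (pos_iff_ne_zero.mpr hxl) (pos_iff_ne_zero.mpr hxu)).ne' h0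
  have hμle : levyQ μ ε ≤ 1 - c := by
    apply iSup_le
    intro x₀
    have key : ∃ z ∈ ({xl, xu} : Set ℝ), z ∉ Set.Icc x₀ (x₀ + ε) ∧ c ≤ μ {z} := by
      rcases le_or_gt x₀ xl with h1 | h1
      · refine ⟨xu, by simp, ?_, min_le_right _ _⟩
        simp only [Set.mem_Icc, not_and, not_le]
        intro _
        linarith
      · refine ⟨xl, by simp, ?_, min_le_left _ _⟩
        simp only [Set.mem_Icc, not_and, not_le]
        intro h2
        linarith
    obtain ⟨z, _, hz, hcz⟩ := key
    have hsub : Set.Icc x₀ (x₀ + ε) ⊆ {z}ᶜ := fun w hw => by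
      simp only [Set.mem_compl_iff, Set.mem_singleton_iff]
      rintro rfl; exact hz hw
    calc μ (Set.Icc x₀ (x₀ + ε)) ≤ μ {z}ᶜ := measure_mono hsub
      _ = 1 - μ {z} := by
          rw [measure_compl (measurableSet_singleton z) (measure_ne_top μ _), measure_univ]
      _ ≤ 1 - c := tsub_le_tsub le_rfl hcz
  have hcon : (1 : ℝ≥0∞) ≤ 1 - c := le_trans hν1 (le_trans (h ε hεpos) hμle)
  have : (1 : ℝ≥0∞) - c < 1 := ENNReal.sub_lt_self ENNReal.one_ne_top one_ne_zero hcpos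
  exact absurd (lt_of_le_of_lt hcon this) (lt_irrefl _)
end

section
/- If X has the same distribution as φ(Y) where φ : ℝ → ℝ is a non-increasing contraction (i.e., |φ(y) − φ(x)| ≤ |y − x| for all x, y), then X ≤_wd Y. -/
open MeasureTheory Set Filter
open scoped ENNReal NNReal

theorem wdLE_of_antitone_contraction
    (μ ν : Measure ℝ) [IsProbabilityMeasure μ] [IsProbabilityMeasure ν]
    (φ : ℝ → ℝ) (hanti : Antitone φ)
    (hcontr : ∀ x y : ℝ, |φ y - φ x| ≤ |y - x|)
    (h : μ = ν.map φ) :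
    wdLE μ ν := by
  intro ε hε
  refine iSup_le fun x₀ => le_iSup_of_le (φ (x₀ + ε)) ?_
  have hmeas : Measurable φ := hanti.measurable
  have hsub : Set.Icc x₀ (x₀ + ε) ⊆ φ ⁻¹' Set.Icc (φ (x₀ + ε)) (φ (x₀ + ε) + ε) := by
    intro y hy
    constructor
    · exact hanti hy.2
    · have h1 : φ y ≤ φ x₀ := hanti hy.1
      have h2 : φ x₀ - φ (x₀ + ε) ≤ ε := by
        have := hcontr (x₀ + ε) x₀
        have habs : |φ x₀ - φ (x₀ + ε)| ≤ |x₀ - (x₀ + ε)| := this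
        have : |x₀ - (x₀ + ε)| = ε := by
          rw [abs_sub_comm]; simp [abs_of_pos hε]
        rw [this] at habs
        exact (abs_le.mp habs).2
      linarith
  calc ν (Set.Icc x₀ (x₀ + ε))
      ≤ ν (φ ⁻¹' Set.Icc (φ (x₀ + ε)) (φ (x₀ + ε) + ε)) := measure_mono hsub
    _ = μ (Set.Icc (φ (x₀ + ε)) (φ (x₀ + ε) + ε)) := by
        rw [h, Measure.map_apply hmeas measurableSet_Icc]
end

section
/- Let X and Y be random variables on ℕ (positive integers) with decreasing probability mass functions (P(X=k) is non-increasing in k, and similarly for Y). If X ≤_st Y (i.e., P(X > t) ≤ P(Y > t) for all t), then X ≤_wd Y. -/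
open MeasureTheory Set Filter
open scoped ENNReal NNReal

attribute [local instance] Classical.propDecidable

noncomputable def ind (p : ℕ → ℝ≥0∞) (s : Set ℝ) (k : ℕ) : ℝ≥0∞ :=
  if (k : ℝ) ∈ s then p k else 0

/-- The distribution on `ℝ` of an `ℕ`-valued random variable with pmf `p`. -/
noncomputable def discMeasure (p : ℕ → ℝ≥0∞) : Measure ℝ :=
  Measure.sum (fun k : ℕ => p k • Measure.dirac (k : ℝ))

lemma discMeasure_apply (p : ℕ → ℝ≥0∞) {s : Set ℝ} (hs : MeasurableSet s) :
    discMeasure p s = ∑' k : ℕ, ind p s k := by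
  rw [discMeasure, Measure.sum_apply _ hs]
  refine tsum_congr fun k => ?_
  rw [Measure.smul_apply, Measure.dirac_apply' _ hs]
  simp [ind, Set.indicator_apply, mul_ite]

lemma pmf_anti (q : ℕ → ℝ≥0∞) (hq : ∀ k, 1 ≤ k → q (k + 1) ≤ q k) :
    ∀ i j : ℕ, 1 ≤ i → i ≤ j → q j ≤ q i := by
  intro i j hi hij
  induction j, hij using Nat.le_induction with
  | base => exact le_rfl
  | succ n hn ih => exact (hq n (hi.trans hn)).trans ih

lemma tail_sum (p : ℕ → ℝ≥0∞) (hp1 : ∑' k, p k = 1) (m : ℕ) :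
    (∑ k ∈ Finset.range (m + 1), p k) + discMeasure p (Set.Ioi (m : ℝ)) = 1 := by
  rw [discMeasure_apply p measurableSet_Ioi]
  have h1 : (∑ k ∈ Finset.range (m + 1), p k)
      = ∑' k : ℕ, if k < m + 1 then p k else 0 := by
    rw [tsum_eq_sum (s := Finset.range (m + 1))
      (fun k hk => by rw [if_neg]; simpa using Finset.mem_range.not.mp hk)]
    exact (Finset.sum_congr rfl fun k hk => by rw [if_pos (Finset.mem_range.mp hk)]).symm
  have h2 : (∑' k : ℕ, ind p (Set.Ioi (m : ℝ)) k)
      = ∑' k : ℕ, if m < k then p k else 0 := by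
    refine tsum_congr fun k => ?_
    simp [ind, Set.mem_Ioi, Nat.cast_lt]
  rw [h1, h2, ← ENNReal.tsum_add, ← hp1]
  refine tsum_congr fun k => ?_
  split_ifs <;> first | omega | simp

theorem wdLE_of_decreasing_pmf_st
    (p q : ℕ → ℝ≥0∞) (hp1 : ∑' k, p k = 1) (hq1 : ∑' k, q k = 1)
    (hp0 : p 0 = 0) (hq0 : q 0 = 0)
    (hpdec : ∀ k : ℕ, 1 ≤ k → p (k + 1) ≤ p k)
    (hqdec : ∀ k : ℕ, 1 ≤ k → q (k + 1) ≤ q k)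
    (hst : ∀ t : ℝ, discMeasure p (Set.Ioi t) ≤ discMeasure q (Set.Ioi t)) :
    wdLE (discMeasure p) (discMeasure q) := by
  intro ε hε
  set m : ℕ := Nat.floor ε + 1 with hm
  have hmε : (m : ℝ) ≤ ε + 1 := by
    push_cast [hm]
    have := Nat.floor_le hε.le
    linarith
  -- upper bound on levyQ q
  have hub : levyQ (discMeasure q) ε ≤ ∑ k ∈ Finset.range (m + 1), q k := by
    refine iSup_le fun x₀ => ?_
    rw [discMeasure_apply q measurableSet_Icc]
    set a : ℕ := max 1 ⌈x₀⌉₊ with ha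
    set b : ℕ := ⌊x₀ + ε⌋₊ with hb
    have ha1 : 1 ≤ a := le_max_left _ _
    have hax : x₀ ≤ (a : ℝ) :=
      le_trans (Nat.le_ceil x₀) (Nat.cast_le.mpr (le_max_right _ _))
    have hstep : (∑' k : ℕ, ind q (Set.Icc x₀ (x₀ + ε)) k)
        = ∑ k ∈ Finset.Icc a b, ind q (Set.Icc x₀ (x₀ + ε)) k := by
      refine tsum_eq_sum fun k hk => ?_
      simp only [ind]
      by_cases hmem : (k : ℝ) ∈ Set.Icc x₀ (x₀ + ε)
      swap
      · exact if_neg hmem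
      rw [if_pos hmem]
      by_contra hqk
      have hk1 : 1 ≤ k := by
        rcases Nat.eq_zero_or_pos k with h | h
        · exact absurd (h ▸ hq0) hqk
        · exact h
      exact hk (Finset.mem_Icc.mpr ⟨max_le hk1 (Nat.ceil_le.mpr hmem.1),
        Nat.le_floor hmem.2⟩)
    rw [hstep]
    have hba : b + 1 - a ≤ m := by
      rcases le_or_gt a b with h | h
      · have hb1 : 1 ≤ b := ha1.trans h
        have hnn : (0 : ℝ) ≤ x₀ + ε := by
          by_contra hneg
          push_neg at hneg
          have : b = 0 := Nat.floor_eq_zero.mpr (by linarith)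
          omega
        have hbr : (b : ℝ) ≤ x₀ + ε := Nat.floor_le hnn
        have : ((b - a : ℕ) : ℝ) ≤ ε := by
          rw [Nat.cast_sub h]
          linarith
        have := Nat.le_floor this
        omega
      · omega
    calc ∑ k ∈ Finset.Icc a b, ind q (Set.Icc x₀ (x₀ + ε)) k
        ≤ ∑ k ∈ Finset.Icc a b, q k :=
          Finset.sum_le_sum fun k _ => by simp only [ind]; split <;> simp
      _ = ∑ j ∈ Finset.range (b + 1 - a), q (a + j) := by
          rw [← Finset.Ico_add_one_right_eq_Icc, Finset.sum_Ico_eq_sum_range]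
      _ ≤ ∑ j ∈ Finset.range (b + 1 - a), q (j + 1) :=
          Finset.sum_le_sum fun j _ =>
            pmf_anti q hqdec (j + 1) (a + j) (by omega) (by omega)
      _ ≤ ∑ j ∈ Finset.range m, q (j + 1) :=
          Finset.sum_le_sum_of_subset (Finset.range_subset_range.mpr hba)
      _ ≤ ∑ k ∈ Finset.range (m + 1), q k := by
          conv_rhs => rw [Finset.sum_range_succ']
          simp [hq0]
  -- lower bound on levyQ p
  have hlb : (∑ k ∈ Finset.range (m + 1), p k) ≤ levyQ (discMeasure p) ε := by
    refine le_trans ?_ (le_iSup (fun x₀ : ℝ => discMeasure p (Set.Icc x₀ (x₀ + ε))) 1)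
    rw [discMeasure_apply p measurableSet_Icc]
    have heq : ∀ k ∈ Finset.range (m + 1),
        p k = ind p (Set.Icc (1 : ℝ) (1 + ε)) k := by
      intro k hk
      simp only [ind]
      rcases Nat.eq_zero_or_pos k with h | h
      · subst h
        rw [if_neg]
        · exact hp0
        · simp [Set.mem_Icc]
      · rw [if_pos]
        have hkm : k ≤ m := by
          have := Finset.mem_range.mp hk; omega
        constructor
        · exact_mod_cast Nat.one_le_cast.mpr h
        · calc (k : ℝ) ≤ (m : ℝ) := Nat.cast_le.mpr hkm
            _ ≤ ε + 1 := hmε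
            _ = 1 + ε := by ring
    calc ∑ k ∈ Finset.range (m + 1), p k
        = ∑ k ∈ Finset.range (m + 1), ind p (Set.Icc (1 : ℝ) (1 + ε)) k :=
          Finset.sum_congr rfl heq
      _ ≤ ∑' k : ℕ, ind p (Set.Icc (1 : ℝ) (1 + ε)) k :=
          ENNReal.sum_le_tsum _
  -- stochastic order gives comparison of partial sums
  have hsq : (∑ k ∈ Finset.range (m + 1), q k) ≤ ∑ k ∈ Finset.range (m + 1), p k := by
    have hpT := tail_sum p hp1 m
    have hqT := tail_sum q hq1 m
    have hT : discMeasure p (Set.Ioi (m : ℝ)) ≤ discMeasure q (Set.Ioi (m : ℝ)) := hst m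
    have hTp_ne : discMeasure p (Set.Ioi (m : ℝ)) ≠ ⊤ := by
      intro h
      rw [h, add_top] at hpT
      exact ENNReal.top_ne_one hpT
    rw [← ENNReal.add_le_add_iff_right hTp_ne]
    calc (∑ k ∈ Finset.range (m + 1), q k) + discMeasure p (Set.Ioi (m : ℝ))
        ≤ (∑ k ∈ Finset.range (m + 1), q k) + discMeasure q (Set.Ioi (m : ℝ)) :=
          add_le_add_right hT _
      _ = 1 := hqT
      _ = (∑ k ∈ Finset.range (m + 1), p k) + discMeasure p (Set.Ioi (m : ℝ)) := hpT.symm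
  exact hub.trans (hsq.trans hlb)
end

section
/- Let X ~ Geom(p₁) and Y ~ Geom(p₂) be geometric random variables on ℕ = {1,2,...} (number of trials until first success) with success probabilities p₁, p₂ ∈ (0,1). Then X ≤_wd Y if and only if p₁ ≥ p₂. -/
open MeasureTheory Set Filter
open scoped ENNReal NNReal

/-- The geometric distribution on  (number of trials until first
success) with success probability , as a measure on . -/
noncomputable def geomMeasure (p : ℝ) : Measure ℝ :=
  Measure.sum (fun k : ℕ => ENNReal.ofReal (p * (1 - p) ^ k) • Measure.dirac ((k : ℝ) + 1))

open scoped Classical in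
lemma geom_apply' (p : ℝ) (s : Set ℝ) (hs : MeasurableSet s) :
    geomMeasure p s =
      ∑' k : ℕ, if ((k : ℝ) + 1) ∈ s then ENNReal.ofReal (p * (1 - p) ^ k) else 0 := by
  rw [geomMeasure, Measure.sum_apply _ hs]
  congr 1; funext k
  rw [Measure.smul_apply, Measure.dirac_apply' _ hs]
  by_cases h : ((k : ℝ) + 1) ∈ s
  · simp [h, Set.indicator_of_mem]
  · simp [h, Set.indicator_of_notMem]

lemma geom_sum_real (p : ℝ) (hp : p ∈ Set.Ioo (0:ℝ) 1) (n : ℕ) :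
    ∑ j ∈ Finset.range n, p * (1 - p) ^ j = 1 - (1 - p) ^ n := by
  rw [← Finset.mul_sum, geom_sum_eq (by intro h; nlinarith [hp.1] : (1:ℝ) - p ≠ 1)]
  rw [mul_comm, div_mul_eq_mul_div, div_eq_iff (by nlinarith [hp.1] : (1:ℝ) - p - 1 ≠ 0)]
  ring

open scoped Classical in
lemma window_tsum_le (f : ℕ → ℝ≥0∞) (S : Set ℕ) (m : ℕ)
    (hf : ∀ a j, f (a + j) ≤ f j)
    (hS : ∀ a ∈ S, ∀ k ∈ S, k ≤ a + m) :
    ∑' k, S.indicator f k ≤ ∑ j ∈ Finset.range (m + 1), f j := by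
  by_cases hne : ∃ k, k ∈ S
  · set a := Nat.find hne with ha
    have haS : a ∈ S := Nat.find_spec hne
    have hsupp : ∀ k ∉ Finset.Icc a (a + m), S.indicator f k = 0 := by
      intro k hk
      simp only [Finset.mem_Icc, not_and_or, not_le] at hk
      refine Set.indicator_of_notMem ?_ f
      intro hkS
      rcases hk with hk | hk
      · exact Nat.find_min hne hk hkS
      · exact absurd (hS a haS k hkS) (by omega)
    rw [tsum_eq_sum hsupp]
    have h1 : ∑ k ∈ Finset.Icc a (a + m), S.indicator f k ≤
        ∑ k ∈ Finset.Icc a (a + m), f k :=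
      Finset.sum_le_sum fun k _ => Set.indicator_apply_le fun _ => le_rfl
    refine h1.trans ?_
    rw [← Finset.Ico_add_one_right_eq_Icc, Finset.sum_Ico_eq_sum_range]
    have hr : a + m + 1 - a = m + 1 := by omega
    rw [hr]
    exact Finset.sum_le_sum fun j _ => hf a j
  · push_neg at hne
    have : ∀ k, S.indicator f k = 0 := fun k => Set.indicator_of_notMem (hne k) f
    simp [tsum_congr this]

open scoped Classical in
lemma geom_Icc_le' (p : ℝ) (hp : p ∈ Set.Ioo (0:ℝ) 1) (ε x₀ : ℝ) :
    geomMeasure p (Set.Icc x₀ (x₀ + ε)) ≤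
      ∑ j ∈ Finset.range (⌊ε⌋₊ + 1), ENNReal.ofReal (p * (1 - p) ^ j) := by
  rw [geom_apply' _ _ measurableSet_Icc]
  have := window_tsum_le (fun k => ENNReal.ofReal (p * (1 - p) ^ k))
    {k : ℕ | ((k : ℝ) + 1) ∈ Set.Icc x₀ (x₀ + ε)} ⌊ε⌋₊
    (fun a j => ENNReal.ofReal_le_ofReal (mul_le_mul_of_nonneg_left
      (pow_le_pow_of_le_one (by linarith [hp.2]) (by linarith [hp.1]) (by omega)) hp.1.le))
    (fun a haS k hkS => by
      simp only [Set.mem_setOf_eq, Set.mem_Icc] at haS hkS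
      have h4 : ε < (⌊ε⌋₊ : ℝ) + 1 := Nat.lt_floor_add_one ε
      have : (k : ℝ) < (a : ℝ) + (⌊ε⌋₊ : ℝ) + 1 := by linarith [haS.1, hkS.2]
      exact_mod_cast Nat.lt_add_one_iff.mp (by exact_mod_cast this))
  refine le_trans (le_of_eq (tsum_congr fun k => ?_)) this
  simp [Set.indicator_apply, Set.mem_setOf_eq]

lemma levy_upper (p : ℝ) (hp : p ∈ Set.Ioo (0:ℝ) 1) (ε : ℝ) :
    levyQ (geomMeasure p) ε ≤ ENNReal.ofReal (1 - (1 - p) ^ (⌊ε⌋₊ + 1)) := by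
  refine iSup_le fun x₀ => (geom_Icc_le' p hp ε x₀).trans ?_
  rw [← geom_sum_real p hp (⌊ε⌋₊ + 1), ← ENNReal.ofReal_sum_of_nonneg]
  intro j _
  have : (0:ℝ) ≤ (1 - p) ^ j := pow_nonneg (by linarith [hp.2]) j
  nlinarith [hp.1]

lemma levy_lower (p : ℝ) (hp : p ∈ Set.Ioo (0:ℝ) 1) (ε : ℝ) (hε : 0 < ε) :
    ENNReal.ofReal (1 - (1 - p) ^ (⌊ε⌋₊ + 1)) ≤ levyQ (geomMeasure p) ε := by
  have key : ENNReal.ofReal (1 - (1 - p) ^ (⌊ε⌋₊ + 1)) ≤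
      geomMeasure p (Set.Icc 1 (1 + ε)) := by
    rw [geom_apply' _ _ measurableSet_Icc,
      ← geom_sum_real p hp (⌊ε⌋₊ + 1), ENNReal.ofReal_sum_of_nonneg (fun j _ => by
        have : (0:ℝ) ≤ (1 - p) ^ j := pow_nonneg (by linarith [hp.2]) j
        nlinarith [hp.1])]
    refine le_trans (le_of_eq ?_) (ENNReal.sum_le_tsum (Finset.range (⌊ε⌋₊ + 1)))
    refine Finset.sum_congr rfl fun j hj => ?_
    have hjm : j ≤ ⌊ε⌋₊ := by
      simp only [Finset.mem_range] at hj; omega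
    have hjε : (j : ℝ) ≤ ε := le_trans (by exact_mod_cast hjm) (Nat.floor_le hε.le)
    have : ((j : ℝ) + 1) ∈ Set.Icc (1:ℝ) (1 + ε) := by
      refine ⟨by have := Nat.cast_nonneg (α := ℝ) j; linarith, by linarith⟩
    simp [this]
  exact key.trans (le_iSup (fun x₀ => geomMeasure p (Set.Icc x₀ (x₀ + ε))) 1)

theorem wdLE_geometric_iff (p₁ p₂ : ℝ)
    (hp₁ : p₁ ∈ Set.Ioo (0 : ℝ) 1) (hp₂ : p₂ ∈ Set.Ioo (0 : ℝ) 1) :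
    wdLE (geomMeasure p₁) (geomMeasure p₂) ↔ p₂ ≤ p₁ := by
  constructor
  · intro h
    have h2 := h (1/2) (by norm_num)
    have hfl : ⌊(1/2 : ℝ)⌋₊ = 0 := by norm_num [Nat.floor_eq_zero]
    have l2 := levy_lower p₂ hp₂ (1/2) (by norm_num)
    have u1 := levy_upper p₁ hp₁ (1/2)
    rw [hfl] at l2 u1
    simp only [zero_add, pow_one] at l2 u1
    have : ENNReal.ofReal (1 - (1 - p₂)) ≤ ENNReal.ofReal (1 - (1 - p₁)) :=
      le_trans l2 (le_trans h2 u1)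
    rw [ENNReal.ofReal_le_ofReal_iff (by linarith [hp₁.1])] at this
    linarith
  · intro hle ε hε
    refine (levy_upper p₂ hp₂ ε).trans (le_trans ?_ (levy_lower p₁ hp₁ ε hε))
    refine ENNReal.ofReal_le_ofReal ?_
    have : (1 - p₁) ^ (⌊ε⌋₊ + 1) ≤ (1 - p₂) ^ (⌊ε⌋₊ + 1) :=
      pow_le_pow_left₀ (by linarith [hp₁.2]) (by linarith) _
    linarith
end

section
/- Let X ~ Be(p₁) and Y ~ Be(p₂) be Bernoulli random variables. Then X ≤_wd Y if and only if max{p₁, 1−p₁} ≥ max{p₂, 1−p₂}. In particular, Be(p) ≤_wd Be(1/2) for all p ∈ [0,1]. -/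
open MeasureTheory Set Filter
open scoped ENNReal NNReal

/-- The Bernoulli distribution with success probability , as a measure on . -/
noncomputable def bernMeasure (p : ℝ) : Measure ℝ :=
  ENNReal.ofReal (1 - p) • Measure.dirac (0 : ℝ) + ENNReal.ofReal p • Measure.dirac (1 : ℝ)

lemma bern_Icc (p a b : ℝ) :
    bernMeasure p (Set.Icc a b)
      = (if (0:ℝ) ∈ Set.Icc a b then ENNReal.ofReal (1-p) else 0)
        + (if (1:ℝ) ∈ Set.Icc a b then ENNReal.ofReal p else 0) := by
  simp [bernMeasure, Measure.dirac_apply' _ measurableSet_Icc, Set.indicator_apply]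

lemma levyQ_bern_lt_one {p ε : ℝ} (hp : p ∈ Set.Icc (0:ℝ) 1) (h0 : 0 < ε) (h1 : ε < 1) :
    levyQ (bernMeasure p) ε = ENNReal.ofReal (max p (1 - p)) := by
  obtain ⟨hp0, hp1⟩ := hp
  apply le_antisymm
  · apply iSup_le
    intro x₀
    rw [bern_Icc]
    by_cases h0m : (0:ℝ) ∈ Set.Icc x₀ (x₀ + ε) <;>
      by_cases h1m : (1:ℝ) ∈ Set.Icc x₀ (x₀ + ε)
    · exfalso
      obtain ⟨ha, _⟩ := h0m
      obtain ⟨_, hb⟩ := h1m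
      linarith
    · simp only [h0m, h1m, if_true, if_false, add_zero]
      exact ENNReal.ofReal_le_ofReal (le_max_right _ _)
    · simp only [h0m, h1m, if_true, if_false, zero_add]
      exact ENNReal.ofReal_le_ofReal (le_max_left _ _)
    · simp [h0m, h1m]
  · rcases le_total p (1 - p) with h | h
    · rw [max_eq_right h]
      have : ENNReal.ofReal (1 - p) ≤ bernMeasure p (Set.Icc 0 (0 + ε)) := by
        rw [bern_Icc]
        have : (1:ℝ) ∉ Set.Icc (0:ℝ) (0 + ε) := by
          simp only [Set.mem_Icc, not_and_or, not_le]; right; linarith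
        simp [this, Set.mem_Icc, le_of_lt h0]
      exact this.trans (le_iSup (fun x₀ => bernMeasure p (Set.Icc x₀ (x₀ + ε))) 0)
    · rw [max_eq_left h]
      have : ENNReal.ofReal p ≤ bernMeasure p (Set.Icc 1 (1 + ε)) := by
        rw [bern_Icc]
        have : (0:ℝ) ∉ Set.Icc (1:ℝ) (1 + ε) := by
          simp only [Set.mem_Icc, not_and_or, not_le]; left; linarith
        simp [this, Set.mem_Icc, le_of_lt h0]
      exact this.trans (le_iSup (fun x₀ => bernMeasure p (Set.Icc x₀ (x₀ + ε))) 1)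

lemma levyQ_bern_ge_one {p ε : ℝ} (hp : p ∈ Set.Icc (0:ℝ) 1) (h1 : 1 ≤ ε) :
    levyQ (bernMeasure p) ε = 1 := by
  obtain ⟨hp0, hp1⟩ := hp
  have huniv : bernMeasure p Set.univ = 1 := by
    simp [bernMeasure, ← ENNReal.ofReal_add (by linarith : (0:ℝ) ≤ 1 - p) hp0]
  apply le_antisymm
  · apply iSup_le
    intro x₀
    rw [← huniv]
    exact measure_mono (Set.subset_univ _)
  · have : (1:ℝ≥0∞) ≤ bernMeasure p (Set.Icc 0 (0 + ε)) := by
      rw [bern_Icc]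
      have h0m : (0:ℝ) ∈ Set.Icc (0:ℝ) (0 + ε) := by constructor <;> linarith
      have h1m : (1:ℝ) ∈ Set.Icc (0:ℝ) (0 + ε) := by constructor <;> linarith
      rw [if_pos h0m, if_pos h1m, ← ENNReal.ofReal_add (by linarith) hp0]
      simp
    exact this.trans (le_iSup (fun x₀ => bernMeasure p (Set.Icc x₀ (x₀ + ε))) 0)

lemma wdLE_bern_iff {p q : ℝ} (hp : p ∈ Set.Icc (0:ℝ) 1) (hq : q ∈ Set.Icc (0:ℝ) 1) :
    wdLE (bernMeasure p) (bernMeasure q) ↔ max q (1 - q) ≤ max p (1 - p) := by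
  constructor
  · intro H
    have h := H (1/2) (by norm_num)
    rw [levyQ_bern_lt_one hp (by norm_num) (by norm_num),
        levyQ_bern_lt_one hq (by norm_num) (by norm_num)] at h
    have hmax : (0:ℝ) ≤ max p (1 - p) := le_max_of_le_left hp.1
    exact (ENNReal.ofReal_le_ofReal_iff hmax).mp h
  · intro h ε hε
    rcases lt_or_ge ε 1 with h1 | h1
    · rw [levyQ_bern_lt_one hp hε h1, levyQ_bern_lt_one hq hε h1]
      exact ENNReal.ofReal_le_ofReal h
    · rw [levyQ_bern_ge_one hp h1, levyQ_bern_ge_one hq h1]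

theorem wdLE_bernoulli_iff (p₁ p₂ : ℝ)
    (hp₁ : p₁ ∈ Set.Icc (0 : ℝ) 1) (hp₂ : p₂ ∈ Set.Icc (0 : ℝ) 1) :
    (wdLE (bernMeasure p₁) (bernMeasure p₂) ↔
        max p₂ (1 - p₂) ≤ max p₁ (1 - p₁)) ∧
      ∀ p ∈ Set.Icc (0 : ℝ) 1, wdLE (bernMeasure p) (bernMeasure (1 / 2)) := by
  refine ⟨wdLE_bern_iff hp₁ hp₂, fun p hp => (wdLE_bern_iff hp (by norm_num)).mpr ?_⟩
  have : max (1/2 : ℝ) (1 - 1/2) = 1/2 := by norm_num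
  rw [this]
  rcases le_total p (1/2) with h | h
  · exact le_max_of_le_right (by linarith)
  · exact le_max_of_le_left h
end

section
/- Let X ~ Bin(m, p) and Y ~ Bin(n, p) be binomial random variables with the same success probability p. If m ≤ n then X ≤_wd Y. -/
open MeasureTheory Set Filter
open scoped ENNReal NNReal

/-- The binomial distribution `Bin(n, p)`, as a measure on . -/
noncomputable def binomMeasure (n : ℕ) (p : ℝ) : Measure ℝ :=
  discMeasure (fun k : ℕ =>
    ENNReal.ofReal ((n.choose k : ℝ) * p ^ k * (1 - p) ^ (n - k)))

/-- Real binomial pmf. -/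
noncomputable def bR (p : ℝ) (n k : ℕ) : ℝ :=
  (n.choose k : ℝ) * p ^ k * (1 - p) ^ (n - k)

lemma bR_nonneg {p : ℝ} (hp : p ∈ Set.Icc (0 : ℝ) 1) (n k : ℕ) : 0 ≤ bR p n k := by
  obtain ⟨h0, h1⟩ := hp
  have hq : (0 : ℝ) ≤ 1 - p := by linarith
  exact mul_nonneg (mul_nonneg (by positivity) (pow_nonneg h0 k)) (pow_nonneg hq _)

lemma bR_conv (p : ℝ) {m r n : ℕ} (h : m + r = n) (k : ℕ) :
    bR p n k = ∑ ij ∈ Finset.HasAntidiagonal.antidiagonal k, bR p m ij.1 * bR p r ij.2 := by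
  subst h
  have hc : (((m + r).choose k : ℕ) : ℝ)
      = ∑ ij ∈ Finset.HasAntidiagonal.antidiagonal k, (m.choose ij.1 : ℝ) * (r.choose ij.2 : ℝ) := by
    rw [Nat.add_choose_eq]; push_cast; rfl
  unfold bR
  rw [hc, Finset.sum_mul, Finset.sum_mul]
  refine Finset.sum_congr rfl ?_
  rintro ⟨i, j⟩ hij
  rw [Finset.HasAntidiagonal.mem_antidiagonal] at hij
  simp only at hij ⊢
  by_cases him : i ≤ m
  · by_cases hjr : j ≤ r
    · have h1 : m + r - k = (m - i) + (r - j) := by omega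
      have h2 : k = i + j := hij.symm
      rw [h1, h2, pow_add, pow_add]; ring
    · have h0 : r.choose j = 0 := Nat.choose_eq_zero_of_lt (by omega)
      simp [h0]
  · have h0 : m.choose i = 0 := Nat.choose_eq_zero_of_lt (by omega)
    simp [h0]

lemma tsum_antidiag (f : ℕ × ℕ → ℝ≥0∞) :
    ∑' n : ℕ, ∑ kl ∈ Finset.HasAntidiagonal.antidiagonal n, f kl = ∑' kl : ℕ × ℕ, f kl := by
  have h1 : ∀ n : ℕ, ∑ kl ∈ Finset.HasAntidiagonal.antidiagonal n, f kl
      = ∑' kl : (Finset.HasAntidiagonal.antidiagonal n : Finset (ℕ × ℕ)), f kl := fun n => by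
    rw [tsum_fintype, ← Finset.sum_finset_coe]; rfl
  simp_rw [h1]
  rw [← ENNReal.tsum_sigma' (fun x : Σ n : ℕ, Finset.HasAntidiagonal.antidiagonal n => f x.2),
    ← Finset.HasAntidiagonal.sigmaAntidiagonalEquivProd.tsum_eq f]
  rfl

lemma binomMeasure_apply (n : ℕ) (p : ℝ) {s : Set ℝ} (hs : MeasurableSet s) :
    binomMeasure n p s
      = ∑' k : ℕ, ENNReal.ofReal (bR p n k) * s.indicator 1 (k : ℝ) := by
  rw [binomMeasure, discMeasure, Measure.sum_apply _ hs]
  refine tsum_congr fun k => ?_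
  rw [Measure.smul_apply, Measure.dirac_apply' _ hs, smul_eq_mul]
  rfl

theorem wdLE_binomial (m n : ℕ) (p : ℝ) (hp : p ∈ Set.Icc (0 : ℝ) 1)
    (hmn : m ≤ n) :
    wdLE (binomMeasure m p) (binomMeasure n p) := by
  intro ε hε
  obtain ⟨hp0, hp1⟩ := hp
  have hq0 : (0 : ℝ) ≤ 1 - p := by linarith
  set r := n - m with hrdef
  have hnr : m + r = n := by omega
  -- the weights of Bin(r, p) sum to (at most) 1
  have hsum : ∑' j : ℕ, ENNReal.ofReal (bR p r j) ≤ 1 := by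
    have h1 : ∑' j : ℕ, ENNReal.ofReal (bR p r j)
        = ∑ j ∈ Finset.range (r + 1), ENNReal.ofReal (bR p r j) := by
      refine tsum_eq_sum ?_
      intro j hj
      have hj' : r < j := by simpa [Nat.lt_succ_iff, Nat.succ_le_iff] using hj
      have h0 : r.choose j = 0 := Nat.choose_eq_zero_of_lt hj'
      simp [bR, h0]
    rw [h1, ← ENNReal.ofReal_sum_of_nonneg (fun j _ => bR_nonneg ⟨hp0, hp1⟩ r j)]
    have h2 : ∑ j ∈ Finset.range (r + 1), bR p r j = 1 := by
      have := add_pow p (1 - p) r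
      simp only [add_sub_cancel, one_pow] at this
      calc ∑ j ∈ Finset.range (r + 1), bR p r j
          = ∑ j ∈ Finset.range (r + 1), p ^ j * (1 - p) ^ (r - j) * (r.choose j : ℝ) := by
            refine Finset.sum_congr rfl fun j _ => ?_; unfold bR; ring
        _ = 1 := by rw [← this]
    rw [h2]; simp
  rw [levyQ]
  refine iSup_le fun x₀ => ?_
  have hmeas : MeasurableSet (Icc x₀ (x₀ + ε)) := measurableSet_Icc
  rw [binomMeasure_apply n p hmeas]
  have key : ∑' k : ℕ, ENNReal.ofReal (bR p n k) * (Icc x₀ (x₀ + ε)).indicator 1 (k : ℝ)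
      = ∑' ij : ℕ × ℕ, ENNReal.ofReal (bR p r ij.2) *
          (ENNReal.ofReal (bR p m ij.1) * (Icc x₀ (x₀ + ε)).indicator 1 ((ij.1 : ℝ) + ij.2)) := by
    rw [← tsum_antidiag]
    refine tsum_congr fun k => ?_
    rw [bR_conv p hnr k, ENNReal.ofReal_sum_of_nonneg
      (fun ij _ => mul_nonneg (bR_nonneg ⟨hp0, hp1⟩ m ij.1) (bR_nonneg ⟨hp0, hp1⟩ r ij.2)),
      Finset.sum_mul]
    refine Finset.sum_congr rfl ?_
    rintro ⟨i, j⟩ hij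
    rw [Finset.HasAntidiagonal.mem_antidiagonal] at hij
    simp only at hij ⊢
    rw [ENNReal.ofReal_mul (bR_nonneg ⟨hp0, hp1⟩ m i)]
    have : ((i : ℝ) + j) = (k : ℝ) := by exact_mod_cast congrArg (Nat.cast : ℕ → ℝ) hij
    rw [this]; ring
  rw [key, ENNReal.tsum_prod']
  -- swap order: sum over j (second coord) outside
  rw [ENNReal.tsum_comm]
  have step : ∀ j : ℕ, ∑' i : ℕ, ENNReal.ofReal (bR p r j) *
      (ENNReal.ofReal (bR p m i) * (Icc x₀ (x₀ + ε)).indicator 1 ((i : ℝ) + j))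
      ≤ ENNReal.ofReal (bR p r j) * levyQ (binomMeasure m p) ε := by
    intro j
    rw [ENNReal.tsum_mul_left]
    refine mul_le_mul_right ?_ _
    have hshift : ∑' i : ℕ, ENNReal.ofReal (bR p m i) *
        (Icc x₀ (x₀ + ε)).indicator 1 ((i : ℝ) + j)
        = binomMeasure m p (Icc (x₀ - j) (x₀ - j + ε)) := by
      rw [binomMeasure_apply m p measurableSet_Icc]
      refine tsum_congr fun i => ?_
      congr 1
      have hmem : ((i : ℝ) + j ∈ Icc x₀ (x₀ + ε)) ↔ ((i : ℝ) ∈ Icc (x₀ - j) (x₀ - j + ε)) := by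
        simp only [Set.mem_Icc]
        constructor <;> rintro ⟨h1, h2⟩ <;> constructor <;> linarith
      rw [Set.indicator_apply, Set.indicator_apply, if_congr hmem rfl rfl]; simp
    rw [hshift]
    exact le_iSup (fun x₀ => binomMeasure m p (Icc x₀ (x₀ + ε))) (x₀ - j)
  calc ∑' (j : ℕ) (i : ℕ), ENNReal.ofReal (bR p r j) *
        (ENNReal.ofReal (bR p m i) * (Icc x₀ (x₀ + ε)).indicator 1 ((i : ℝ) + j))
      ≤ ∑' j : ℕ, ENNReal.ofReal (bR p r j) * levyQ (binomMeasure m p) ε :=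
        ENNReal.tsum_le_tsum step
    _ = (∑' j : ℕ, ENNReal.ofReal (bR p r j)) * levyQ (binomMeasure m p) ε :=
        ENNReal.tsum_mul_right
    _ ≤ 1 * levyQ (binomMeasure m p) ε := mul_le_mul_left hsum _
    _ = levyQ (binomMeasure m p) ε := one_mul _
end

section
/- For a unimodal pmf p on ℕ₀ and any m ∈ ℕ₀, sup_{i ∈ ℕ₀} Σ_{k=i}^{i+m} p_k = p_{[0]} + p_{[1]} + ... + p_{[m]}, where p_{[0]} ≥ p_{[1]} ≥ ... is the decreasing rearrangement of p. -/
open MeasureTheory Set Filter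
open scoped ENNReal NNReal

/-- Sum of the  largest values of , as the supremum of sums over
-element subsets. -/
noncomputable def largestSum (p : ℕ → ℝ≥0∞) (k : ℕ) : ℝ≥0∞ :=
  ⨆ (s : Finset ℕ) (_ : s.card = k), ∑ i ∈ s, p i

/--  is a unimodal pmf on . -/
def Unimodal (p : ℕ → ℝ≥0∞) : Prop :=
  ∃ M : ℕ, (∀ k < M, p k ≤ p (k + 1)) ∧ (∀ k ≥ M, p (k + 1) ≤ p k)

lemma mono_below (p : ℕ → ℝ≥0∞) (M : ℕ) (h : ∀ k < M, p k ≤ p (k + 1)) :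
    ∀ a b, a ≤ b → b ≤ M → p a ≤ p b := by
  intro a b hab hbM
  induction b with
  | zero => simp [Nat.le_zero.mp hab]
  | succ n ih =>
    rcases Nat.lt_or_ge a (n+1) with h' | h'
    · exact (ih (Nat.lt_succ_iff.mp h') (le_trans (Nat.le_succ n) hbM)).trans
        (h n (Nat.lt_of_succ_le hbM))
    · have : a = n + 1 := le_antisymm hab h'
      simp [this]

lemma anti_above (p : ℕ → ℝ≥0∞) (M : ℕ) (h : ∀ k ≥ M, p (k + 1) ≤ p k) :
    ∀ a b, M ≤ a → a ≤ b → p b ≤ p a := by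
  intro a b hMa hab
  induction b with
  | zero => simp [Nat.le_zero.mp hab]
  | succ n ih =>
    rcases Nat.lt_or_ge a (n+1) with h' | h'
    · exact (h n (le_trans hMa (Nat.lt_succ_iff.mp h'))).trans
        (ih (Nat.lt_succ_iff.mp h'))
    · have : a = n + 1 := le_antisymm hab h'
      simp [this]

lemma sumB (p : ℕ → ℝ≥0∞) :
    ∀ (n M : ℕ) (t : Finset ℕ), t.card = n →
      (∀ a b, M ≤ a → a ≤ b → p b ≤ p a) → (∀ x ∈ t, M ≤ x) →
      ∑ x ∈ t, p x ≤ ∑ k ∈ Finset.range n, p (M + k) := by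
  intro n
  induction n with
  | zero =>
    intro M t ht _ _
    simp [Finset.card_eq_zero.mp ht]
  | succ n ih =>
    intro M t ht hanti hmem
    have hne : t.Nonempty := Finset.card_pos.mp (by omega)
    set x := t.min' hne with hx
    have hxt : x ∈ t := t.min'_mem hne
    have hMx : M ≤ x := hmem x hxt
    have hsplit : ∑ y ∈ t.erase x, p y + p x = ∑ y ∈ t, p y :=
      Finset.sum_erase_add t p hxt
    have hcard : (t.erase x).card = n := by
      rw [Finset.card_erase_of_mem hxt, ht]; omega
    have hmem' : ∀ y ∈ t.erase x, M + 1 ≤ y := by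
      intro y hy
      have hyt := Finset.mem_erase.mp hy
      have := t.min'_le y hyt.2
      omega
    have hanti' : ∀ a b, M + 1 ≤ a → a ≤ b → p b ≤ p a := fun a b ha hab =>
      hanti a b (by omega) hab
    have hrec := ih (M + 1) (t.erase x) hcard hanti' hmem'
    have hpx : p x ≤ p M := hanti M x le_rfl hMx
    calc ∑ y ∈ t, p y = ∑ y ∈ t.erase x, p y + p x := hsplit.symm
      _ ≤ (∑ k ∈ Finset.range n, p (M + 1 + k)) + p M := add_le_add hrec hpx
      _ = ∑ k ∈ Finset.range (n + 1), p (M + k) := by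
          rw [Finset.sum_range_succ' (fun k => p (M + k)) n]
          simp only [add_zero]
          congr 1
          apply Finset.sum_congr rfl
          intro k _
          congr 1
          omega

lemma sumA (p : ℕ → ℝ≥0∞) :
    ∀ (n M : ℕ) (t : Finset ℕ), t.card = n →
      (∀ a b, a ≤ b → b ≤ M → p a ≤ p b) → (∀ x ∈ t, x < M) →
      ∑ x ∈ t, p x ≤ ∑ k ∈ Finset.range n, p (M - 1 - k) := by
  intro n
  induction n with
  | zero =>
    intro M t ht _ _
    simp [Finset.card_eq_zero.mp ht]
  | succ n ih =>
    intro M t ht hmono hmem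
    have hne : t.Nonempty := Finset.card_pos.mp (by omega)
    set x := t.max' hne with hx
    have hxt : x ∈ t := t.max'_mem hne
    have hxM : x < M := hmem x hxt
    have hsplit : ∑ y ∈ t.erase x, p y + p x = ∑ y ∈ t, p y :=
      Finset.sum_erase_add t p hxt
    have hcard : (t.erase x).card = n := by
      rw [Finset.card_erase_of_mem hxt, ht]; omega
    have hmem' : ∀ y ∈ t.erase x, y < M - 1 := by
      intro y hy
      have hyt := Finset.mem_erase.mp hy
      have := t.le_max' y hyt.2
      omega
    have hmono' : ∀ a b, a ≤ b → b ≤ M - 1 → p a ≤ p b := fun a b hab hb =>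
      hmono a b hab (by omega)
    have hrec := ih (M - 1) (t.erase x) hcard hmono' hmem'
    have hpx : p x ≤ p (M - 1) := hmono x (M - 1) (by omega) (by omega)
    calc ∑ y ∈ t, p y = ∑ y ∈ t.erase x, p y + p x := hsplit.symm
      _ ≤ (∑ k ∈ Finset.range n, p (M - 1 - 1 - k)) + p (M - 1) := add_le_add hrec hpx
      _ = ∑ k ∈ Finset.range (n + 1), p (M - 1 - k) := by
          rw [Finset.sum_range_succ' (fun k => p (M - 1 - k)) n]
          simp only [Nat.sub_zero]
          congr 1
          apply Finset.sum_congr rfl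
          intro k _
          congr 1
          omega

theorem sup_window_sum_eq_largestSum_of_unimodal
    (p : ℕ → ℝ≥0∞) (hp1 : ∑' k, p k = 1) (hp : Unimodal p) (m : ℕ) :
    ⨆ i : ℕ, ∑ k ∈ Finset.Icc i (i + m), p k = largestSum p (m + 1) := by
  obtain ⟨M, hmono', hanti'⟩ := hp
  have hmono := mono_below p M hmono'
  have hanti := anti_above p M hanti'
  apply le_antisymm
  · apply iSup_le
    intro i
    have hc : (Finset.Icc i (i + m)).card = m + 1 := by
      rw [Nat.card_Icc]; omega
    exact le_iSup₂_of_le (Finset.Icc i (i + m)) hc le_rfl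
  · apply iSup₂_le
    intro s hs
    -- split s at M
    set t₁ := s.filter (fun x => x < M) with ht₁
    set t₂ := s.filter (fun x => ¬ x < M) with ht₂
    set c := t₁.card with hcdef
    set d := t₂.card with hddef
    have hcd : c + d = m + 1 := by
      rw [hcdef, hddef, ht₁, ht₂, Finset.card_filter_add_card_filter_not, hs]
    have hcM : c ≤ M := by
      have : t₁ ⊆ Finset.range M := by
        intro x hx
        simp only [ht₁, Finset.mem_filter] at hx
        exact Finset.mem_range.mpr hx.2
      calc c = t₁.card := rfl
        _ ≤ (Finset.range M).card := Finset.card_le_card this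
        _ = M := Finset.card_range M
    have hsum : ∑ x ∈ s, p x = ∑ x ∈ t₁, p x + ∑ x ∈ t₂, p x :=
      (Finset.sum_filter_add_sum_filter_not s _ p).symm
    have h1 : ∑ x ∈ t₁, p x ≤ ∑ k ∈ Finset.range c, p (M - 1 - k) :=
      sumA p c M t₁ rfl hmono (fun x hx => (Finset.mem_filter.mp hx).2)
    have h2 : ∑ x ∈ t₂, p x ≤ ∑ k ∈ Finset.range d, p (M + k) :=
      sumB p d M t₂ rfl hanti (fun x hx => by
        have := (Finset.mem_filter.mp hx).2; omega)
    -- the window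
    have hwin : ∑ k ∈ Finset.Icc (M - c) (M - c + m), p k
        = ∑ k ∈ Finset.range c, p (M - 1 - k) + ∑ k ∈ Finset.range d, p (M + k) := by
      rw [← Finset.Ico_add_one_right_eq_Icc, Finset.sum_Ico_eq_sum_range]
      have hm1 : M - c + m + 1 - (M - c) = m + 1 := by omega
      rw [hm1]
      have : m + 1 = c + d := hcd.symm
      rw [this, Finset.sum_range_add]
      congr 1
      · rw [← Finset.sum_range_reflect (fun k => p (M - 1 - k)) c]
        apply Finset.sum_congr rfl
        intro k hk
        have hk' := Finset.mem_range.mp hk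
        congr 1
        omega
      · apply Finset.sum_congr rfl
        intro k _
        congr 1
        omega
    calc ∑ x ∈ s, p x = ∑ x ∈ t₁, p x + ∑ x ∈ t₂, p x := hsum
      _ ≤ ∑ k ∈ Finset.range c, p (M - 1 - k) + ∑ k ∈ Finset.range d, p (M + k) :=
          add_le_add h1 h2
      _ = ∑ k ∈ Finset.Icc (M - c) (M - c + m), p k := hwin.symm
      _ ≤ ⨆ i : ℕ, ∑ k ∈ Finset.Icc i (i + m), p k :=
          le_iSup (fun i : ℕ => ∑ k ∈ Finset.Icc i (i + m), p k) (M - c)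
end
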